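/- The cost function f(u) = Σ_i (x_i(1; u) + x_i(2; u)) + γ Σ_i n_i u_i, where x(1;u) and x(2;u) are obtained from the two-step controlled SIS dynamics with constant binary control u, admits a QUBO representation: there exist a constant C ∈ ℝ and coefficients P_i, Q_{ij} ∈ ℝ such that f(u) = C + Σ_i P_i z_i + Σ_{i≠j} Q_{ij} z_i z_j for all u ∈ {0,1}^M, where z_i = 1 - u_i. -/
import Mathlib


/-- One step of the controlled SIS dynamics. -/
noncomputable def sisStep {M : ℕ} (n : Fin M → ℝ) (A : Fin M → Fin M → ℝ) (μ lam : ℝ)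
    (u x : Fin M → ℝ) : Fin M → ℝ :=
  fun i =>
    (1 - μ) * x i + (lam / n i) * (n i - x i) * (x i + (1 - u i) * ∑ j, A i j * x j)

/-- Constant coefficient of the first SIS step in `z i = 1 - u i`. -/
noncomputable def qA {M : ℕ} (n : Fin M → ℝ) (A : Fin M → Fin M → ℝ) (μ lam : ℝ)
    (xbar : Fin M → ℝ) (i : Fin M) : ℝ :=
  (1 - μ) * xbar i + (lam / n i) * (n i - xbar i) * xbar i

/-- Linear coefficient of the first SIS step in `z i = 1 - u i`. -/
noncomputable def qB {M : ℕ} (n : Fin M → ℝ) (A : Fin M → Fin M → ℝ) (μ lam : ℝ)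
    (xbar : Fin M → ℝ) (i : Fin M) : ℝ :=
  (lam / n i) * (n i - xbar i) * (∑ j, A i j * xbar j)

/-- The first step is affine in `z i = 1 - u i`. -/
lemma sisStep_one {M : ℕ} (n : Fin M → ℝ) (A : Fin M → Fin M → ℝ) (μ lam : ℝ)
    (u xbar : Fin M → ℝ) (i : Fin M) :
    sisStep n A μ lam u xbar i
      = qA n A μ lam xbar i + qB n A μ lam xbar i * (1 - u i) := by
  simp only [sisStep, qA, qB]
  ring

/-- The two-step cost of the controlled SIS model admits a QUBO representation
in the complemented variables `zᵢ = 1 - uᵢ`. -/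
theorem cost_qubo {M : ℕ} (n : Fin M → ℝ) (A : Fin M → Fin M → ℝ)
    (μ lam γ : ℝ) (xbar : Fin M → ℝ) (hn : ∀ i, 0 < n i) :
    ∃ (C : ℝ) (P : Fin M → ℝ) (Q : Fin M → Fin M → ℝ),
      ∀ u : Fin M → ℝ, (∀ i, u i = 0 ∨ u i = 1) →
        (∑ i, (sisStep n A μ lam u xbar i
              + sisStep n A μ lam u (sisStep n A μ lam u xbar) i))
          + γ * ∑ i, n i * u i
        = C + (∑ i, P i * (1 - u i))
            + ∑ i, ∑ j ∈ Finset.univ.erase i, Q i j * (1 - u i) * (1 - u j) := by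
  classical
  set α := qA n A μ lam xbar with hα
  set β := qB n A μ lam xbar with hβ
  set k : Fin M → ℝ := fun i => lam / n i with hk
  set S : Fin M → ℝ := fun i => ∑ j, A i j * α j with hS
  -- constant term of the second step
  set D : Fin M → ℝ := fun i => (1 - μ) * α i + k i * (n i - α i) * α i with hD
  -- linear coefficient of the second step
  set L : Fin M → ℝ := fun i =>
    (1 - μ) * β i + k i * ((n i - α i) * β i - β i * α i - β i * β i)
      + k i * (n i - α i - β i) * S i + k i * (n i - α i - β i) * (A i i * β i) with hL
  refine ⟨(∑ i, (α i + D i)) + γ * ∑ i, n i,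
    fun i => β i + L i - γ * n i,
    fun i j => k i * (n i - α i - β i) * (A i j * β j), ?_⟩
  intro u hu
  -- key per-coordinate identity for the second step
  have key : ∀ i, sisStep n A μ lam u (sisStep n A μ lam u xbar) i
      = D i + L i * (1 - u i)
        + ∑ j ∈ Finset.univ.erase i,
            k i * (n i - α i - β i) * (A i j * β j) * (1 - u i) * (1 - u j) := by
    intro i
    have hx1 : ∀ j, sisStep n A μ lam u xbar j = α j + β j * (1 - u j) :=
      fun j => sisStep_one n A μ lam u xbar j
    have hE : (∑ j ∈ Finset.univ.erase i,
            k i * (n i - α i - β i) * (A i j * β j) * (1 - u i) * (1 - u j))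
        = k i * (n i - α i - β i) * (1 - u i)
            * ∑ j ∈ Finset.univ.erase i, A i j * (β j * (1 - u j)) := by
      rw [Finset.mul_sum]
      exact Finset.sum_congr rfl fun j _ => by ring
    have hsum : (∑ j, A i j * (α j + β j * (1 - u j)))
        = S i + (A i i * (β i * (1 - u i))
            + ∑ j ∈ Finset.univ.erase i, A i j * (β j * (1 - u j))) := by
      have h1 : (∑ j, A i j * (α j + β j * (1 - u j)))
          = (∑ j, A i j * α j) + ∑ j, A i j * (β j * (1 - u j)) := by
        rw [← Finset.sum_add_distrib]
        exact Finset.sum_congr rfl fun j _ => by ring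
      rw [h1, hS]
      congr 1
      exact (Finset.add_sum_erase _ _ (Finset.mem_univ i)).symm
    rw [funext hx1]
    simp only [sisStep, hE]
    rw [hsum]
    simp only [hD, hL, hk]
    rcases hu i with h | h <;> simp only [h] <;> ring
  have hx1 : ∀ i, sisStep n A μ lam u xbar i = α i + β i * (1 - u i) :=
    fun i => sisStep_one n A μ lam u xbar i
  have hu' : ∀ i, n i * u i = n i - n i * (1 - u i) := fun i => by ring
  calc (∑ i, (sisStep n A μ lam u xbar i
              + sisStep n A μ lam u (sisStep n A μ lam u xbar) i))
          + γ * ∑ i, n i * u i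
      = (∑ i, ((α i + D i) + γ * n i + (β i + L i - γ * n i) * (1 - u i)))
          + ∑ i, ∑ j ∈ Finset.univ.erase i,
              k i * (n i - α i - β i) * (A i j * β j) * (1 - u i) * (1 - u j) := by
        rw [Finset.mul_sum, ← Finset.sum_add_distrib]
        rw [show (∑ i, ((α i + D i) + γ * n i + (β i + L i - γ * n i) * (1 - u i)))
              + ∑ i, ∑ j ∈ Finset.univ.erase i,
                k i * (n i - α i - β i) * (A i j * β j) * (1 - u i) * (1 - u j)
            = ∑ i, (((α i + D i) + γ * n i + (β i + L i - γ * n i) * (1 - u i))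
              + ∑ j ∈ Finset.univ.erase i,
                k i * (n i - α i - β i) * (A i j * β j) * (1 - u i) * (1 - u j))
            from (Finset.sum_add_distrib).symm]
        refine Finset.sum_congr rfl fun i _ => ?_
        rw [hx1 i, key i]
        ring
    _ = ((∑ i, (α i + D i)) + γ * ∑ i, n i)
          + (∑ i, (β i + L i - γ * n i) * (1 - u i))
          + ∑ i, ∑ j ∈ Finset.univ.erase i,
              k i * (n i - α i - β i) * (A i j * β j) * (1 - u i) * (1 - u j) := by
        rw [Finset.sum_add_distrib, Finset.sum_add_distrib, Finset.mul_sum]
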